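/- arXiv:2603.12115 — 8 statements merged into one kernel-verified Lean document; each statement's English description precedes it below -/
import Mathlib

section
/- Let Q(f) = −f^κ + Σ_{α=0}^{κ−1} a_α f^α be a real polynomial of degree κ ≥ 2 whose κ roots q^κ < q^{κ−1} < ⋯ < q^1 are real and distinct. Then for every j ∈ {1,…,κ−1} one has (−1)^j · Σ_{l=1}^{j} 1/Q′(q^l) > 0. (Equivalently, the quantity T^j := π·|Σ_{l=1}^{j} 1/Q′(q^l)| appearing in the main splitting formula is strictly positive, and π·Σ_{l=1}^{j} 1/Q′(q^l) = (−1)^j T^j.) -/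
/-!
Since `Q = -∏ (X - q^l)`, the numbers `1 / Q'(q^l)` are minus the barycentric nodal weights
`w_l = ∏_{m ≠ l} (q^l - q^m)⁻¹`. Split the nodes into the upper ones `A = {q^1, …, q^j}` and the
lower ones `B`, and let `D(A, B) = ∑_{l ∈ A} w_l`. The partial fraction
`1/((x-u)(x-w)) = (1/(x-u) - 1/(x-w)) / (u - w)` gives, for `u ∈ A` and `w ∈ B`,
`(u - w) D(A, B) = D(A, B ∖ w) - D(A ∖ u, B)`, while `D(A, ∅)` vanishes for `|A| ≥ 2` (it is the
coefficient of `X^{|A|-1}` in the interpolant of `1`). By induction on `|A| + |B|`, `D(A, B)` has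
the sign `(-1)^{|A|+1}` whenever `B` is nonempty.
-/

open Polynomial Finset

namespace Lagrange

variable {F ι : Type*} [Field F] {v : ι → F}

theorem eq_nodal_of_monic_of_eval_eq_zero {s : Finset ι} {p : F[X]} (hvs : Set.InjOn v s)
    (hp : p.Monic) (hdeg : p.degree = #s) (hroot : ∀ i ∈ s, p.eval (v i) = 0) :
    p = nodal s v := by
  refine eq_of_degree_sub_lt_of_eval_index_eq s hvs ?_ fun i hi => ?_
  · rw [← hdeg]
    exact degree_sub_lt_left (by rw [hdeg, degree_nodal]) hp.ne_zero
      (by rw [hp.leadingCoeff, nodal_monic.leadingCoeff])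
  · rw [hroot i hi, eval_nodal_at_node hi]

variable [DecidableEq ι]

theorem sum_nodalWeight {s : Finset ι} (hvs : Set.InjOn v s) :
    ∑ i ∈ s, nodalWeight s v i = if #s = 1 then 1 else 0 := by
  rcases s.eq_empty_or_nonempty with rfl | hs
  · simp
  have h := coeff_eq_sum hvs (P := 1) (by rw [degree_one]; exact_mod_cast hs.card_pos)
  simp only [coeff_one, eval_one, one_div, Nat.sub_eq_zero_iff_le] at h
  simp_rw [nodalWeight, prod_inv_distrib, ← h, Nat.le_one_iff_eq_zero_or_eq_one, hs.card_ne_zero,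
    false_or]

theorem nodalWeight_erase {s : Finset ι} {i w : ι} (hw : w ∈ s) (hiw : v i ≠ v w) :
    nodalWeight (s.erase w) v i = (v i - v w) * nodalWeight s v i := by
  have hiw' : i ≠ w := fun h => hiw (h ▸ rfl)
  rw [nodalWeight, nodalWeight, ← mul_prod_erase (s.erase i) _ (mem_erase.mpr ⟨hiw'.symm, hw⟩),
    erase_right_comm, ← mul_assoc, mul_inv_cancel₀ (sub_ne_zero.mpr hiw), one_mul]

theorem sub_mul_sum_nodalWeight_union {A B : Finset ι} (hvA : Set.InjOn v A)
    (hAB : ∀ a ∈ A, ∀ b ∈ B, v a ≠ v b) {u w : ι} (hu : u ∈ A) (hw : w ∈ B) :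
    (v u - v w) * ∑ i ∈ A, nodalWeight (A ∪ B) v i =
      ∑ i ∈ A, nodalWeight (A ∪ B.erase w) v i -
        ∑ i ∈ A.erase u, nodalWeight (A.erase u ∪ B) v i := by
  have hAw : A ∪ B.erase w = (A ∪ B).erase w := by
    rw [erase_union_distrib, erase_eq_of_notMem fun h => hAB w h w hw rfl]
  have hBu : A.erase u ∪ B = (A ∪ B).erase u := by
    rw [erase_union_distrib, erase_eq_of_notMem (s := B) fun h => hAB u hu u h rfl]
  have hw' : w ∈ A ∪ B := mem_union_right A hw
  rw [hAw, hBu, mul_sum, ← add_sum_erase A _ hu, ← add_sum_erase A _ hu,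
    nodalWeight_erase hw' (hAB u hu w hw), add_sub_assoc, ← sum_sub_distrib]
  congr 1
  refine sum_congr rfl fun i hi => ?_
  obtain ⟨hiu, hiA⟩ := mem_erase.mp hi
  rw [nodalWeight_erase hw' (hAB i hiA w hw),
    nodalWeight_erase (mem_union_left B hu) (hvA.ne hiA hu hiu)]
  ring

theorem neg_one_pow_mul_sum_nodalWeight_union_pos {𝕜 : Type*} [Field 𝕜] [LinearOrder 𝕜]
    [IsStrictOrderedRing 𝕜] {v : ι → 𝕜} {A B : Finset ι}
    (hvA : Set.InjOn v A) (hAB : ∀ a ∈ A, ∀ b ∈ B, v b < v a) (hA : A.Nonempty)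
    (hB : B.Nonempty) :
    0 < (-1) ^ (#A + 1) * ∑ i ∈ A, nodalWeight (A ∪ B) v i := by
  obtain ⟨u, hu⟩ := hA
  obtain ⟨w, hw⟩ := hB
  rcases (A.erase u).eq_empty_or_nonempty with hA' | hA'
  · obtain rfl : A = {u} := (erase_eq_empty_iff A u).mp hA' |>.resolve_left (ne_empty_of_mem hu)
    have huB : u ∉ B := fun h => (hAB u hu u h).false
    rw [card_singleton, sum_singleton, ← insert_eq, nodalWeight, erase_insert huB]
    simpa using prod_pos fun b hb => sub_pos.mpr (hAB u hu b hb)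
  have hshrinkA : 0 < (-1) ^ #A * ∑ i ∈ A.erase u, nodalWeight (A.erase u ∪ B) v i := by
    have := neg_one_pow_mul_sum_nodalWeight_union_pos
      (hvA.mono (coe_subset.mpr (erase_subset u A)))
      (fun a ha b hb => hAB a (mem_of_mem_erase ha) b hb) hA' ⟨w, hw⟩
    rwa [card_erase_add_one hu] at this
  have hshrinkB : 0 ≤ (-1) ^ (#A + 1) * ∑ i ∈ A, nodalWeight (A ∪ B.erase w) v i := by
    rcases (B.erase w).eq_empty_or_nonempty with hB' | hB'
    · rw [hB', union_empty, sum_nodalWeight hvA]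
      split_ifs with h <;> simp [h]
    · exact (neg_one_pow_mul_sum_nodalWeight_union_pos (B := B.erase w) hvA
        (fun a ha b hb => hAB a ha b (mem_of_mem_erase hb)) ⟨u, hu⟩ hB').le
  have hrec := sub_mul_sum_nodalWeight_union hvA (fun a ha b hb => (hAB a ha b hb).ne') hu hw
  refine pos_of_mul_pos_right (a := v u - v w) ?_ (sub_pos.mpr (hAB u hu w hw)).le
  rw [mul_left_comm, hrec]
  linear_combination hshrinkB + hshrinkA
termination_by #A + #B
decreasing_by
  · exact Nat.add_lt_add_right (card_erase_lt_of_mem hu) _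
  · exact Nat.add_lt_add_left (card_erase_lt_of_mem hw) _

end Lagrange

theorem neg_X_pow_add_sum_eq_neg_nodal {F ι : Type*} [Field F] {s : Finset ι} {v : ι → F}
    {κ : ℕ} (a : ℕ → F) (hvs : Set.InjOn v s) (hκ : #s = κ)
    (hroot : ∀ i ∈ s, (-(X ^ κ) + ∑ α ∈ range κ, C (a α) * X ^ α).eval (v i) = 0) :
    -(X ^ κ) + ∑ α ∈ range κ, C (a α) * X ^ α = -Lagrange.nodal s v := by
  have hlow : (∑ α ∈ range κ, C (a α) * X ^ α).degree < (κ : WithBot ℕ) := by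
    simpa only [← Fin.sum_univ_eq_sum_range] using degree_sum_fin_lt fun α : Fin κ => a α
  suffices X ^ κ - ∑ α ∈ range κ, C (a α) * X ^ α = Lagrange.nodal s v by rw [← this]; ring
  refine Lagrange.eq_nodal_of_monic_of_eval_eq_zero hvs (monic_X_pow_sub hlow) ?_ fun i hi => ?_
  · rw [degree_sub_eq_left_of_degree_lt (by rwa [degree_X_pow]), degree_X_pow, hκ]
  · rw [← neg_neg (X ^ κ - _), neg_sub, sub_eq_neg_add, eval_neg, hroot i hi, neg_zero]

theorem zeroHopf_splitting_time_positive_general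
    (κ : ℕ) (a : ℕ → ℝ) (Q : Polynomial ℝ)
    (hQ : Q = -(X ^ κ) + ∑ α ∈ Finset.range κ, C (a α) * X ^ α)
    (q : ℕ → ℝ)
    (hroot : ∀ l < κ, Q.eval (q l) = 0)
    (hord : ∀ l m : ℕ, l < m → m < κ → q m < q l)
    (j : ℕ) (hj1 : 1 ≤ j) (hjκ : j ≤ κ - 1) :
    0 < (-1 : ℝ) ^ j * ∑ l ∈ Finset.range j, (Q.derivative.eval (q l))⁻¹ := by
  have hinj : Set.InjOn q (range κ) :=
    StrictAntiOn.injOn fun l _ m hm hlm => hord l m hlm (mem_range.mp hm)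
  have hQ' : Q = -Lagrange.nodal (range κ) q := by
    rw [hQ] at hroot ⊢
    exact neg_X_pow_add_sum_eq_neg_nodal a hinj (card_range κ) fun l hl => hroot l (mem_range.mp hl)
  have hweight : ∀ l ∈ range j,
      (Q.derivative.eval (q l))⁻¹ = -Lagrange.nodalWeight (range κ) q l := fun l hl => by
    rw [hQ', derivative_neg, eval_neg, inv_neg, Lagrange.nodalWeight_eq_eval_derivative_nodal
      (range_subset_range.mpr (by omega) hl)]
  have hsplit : range κ = range j ∪ Ico j κ := by
    rw [range_eq_Ico, range_eq_Ico, Ico_union_Ico_eq_Ico (Nat.zero_le j) (by omega)]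
  have hsign := Lagrange.neg_one_pow_mul_sum_nodalWeight_union_pos (A := range j) (B := Ico j κ)
    (hinj.mono (coe_subset.mpr (range_subset_range.mpr (by omega))))
    (fun l hl m hm => hord l m ((mem_range.mp hl).trans_le (mem_Ico.mp hm).1) (mem_Ico.mp hm).2)
    (nonempty_range_iff.mpr (by omega)) (nonempty_Ico.mpr (by omega))
  rw [card_range, pow_succ] at hsign
  rw [sum_congr rfl hweight, sum_neg_distrib, hsplit]
  linarith

/-- For a real polynomial `Q(f) = -f^κ + Σ_{α<κ} a_α f^α` of degree `κ ≥ 2`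
with `κ` distinct real roots `q^κ < ⋯ < q^1` (here `q l` denotes the root `q^{l+1}`,
so `q` is strictly decreasing in the index), for every `j ∈ {1,…,κ-1}` one has
`(-1)^j · Σ_{l=1}^{j} 1/Q'(q^l) > 0`. -/
theorem zeroHopf_splitting_time_positive
    (κ : ℕ) (hκ : 2 ≤ κ) (a : ℕ → ℝ) (Q : Polynomial ℝ)
    (hQ : Q = -(X ^ κ) + ∑ α ∈ Finset.range κ, C (a α) * X ^ α)
    (q : ℕ → ℝ)
    (hroot : ∀ l < κ, Q.eval (q l) = 0)
    (hord : ∀ l m : ℕ, l < m → m < κ → q m < q l)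
    (j : ℕ) (hj1 : 1 ≤ j) (hjκ : j ≤ κ - 1) :
    0 < (-1 : ℝ) ^ j * ∑ l ∈ Finset.range j, (Q.derivative.eval (q l))⁻¹ :=
  zeroHopf_splitting_time_positive_general κ a Q hQ q hroot hord j hj1 hjκ
end

section
/- Let Q(f) = −f^κ + Σ_{α=0}^{κ−1} a_α f^α be a real polynomial of degree κ ≥ 2 whose κ roots q^κ < q^{κ−1} < ⋯ < q^1 are real and distinct, regarded as a polynomial over ℂ. Fix j ∈ {1,…,κ−1} and a real number p with q^{j+1} < p < q^j. Then the function v ↦ (Q(p + i v))⁻¹ is integrable on ℝ and ∫_{−∞}^{∞} (Q(p + i v))⁻¹ dv = −2π · Σ_{l=1}^{j} 1/Q′(q^l). -/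
open Polynomial Finset MeasureTheory

-- Lagrange interpolation of the constant 1
private lemma lagrange_one {K : Type*} [Field K] (n : ℕ) (hn : 1 ≤ n) (c : ℕ → K)
    (hc : ∀ l < n, ∀ m < n, l ≠ m → c l ≠ c m) :
    (∑ l ∈ Finset.range n, C ((∏ m ∈ (Finset.range n).erase l, (c l - c m))⁻¹) *
      ∏ m ∈ (Finset.range n).erase l, (X - C (c m))) = (1 : K[X]) := by
  classical
  set A : K[X] := ∑ l ∈ Finset.range n, C ((∏ m ∈ (Finset.range n).erase l, (c l - c m))⁻¹) *
      ∏ m ∈ (Finset.range n).erase l, (X - C (c m)) with hA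
  have hw : ∀ l ∈ Finset.range n, (∏ m ∈ (Finset.range n).erase l, (c l - c m)) ≠ 0 := by
    intro l hl
    refine Finset.prod_ne_zero_iff.2 ?_
    intro m hm
    exact sub_ne_zero.2 (hc l (Finset.mem_range.1 hl) m
      (Finset.mem_range.1 (Finset.mem_of_mem_erase hm)) (Ne.symm (Finset.ne_of_mem_erase hm)))
  have heval : ∀ k ∈ Finset.range n, A.eval (c k) = 1 := by
    intro k hk
    rw [hA, eval_finset_sum, Finset.sum_eq_single k]
    · rw [eval_mul, eval_C, eval_prod]
      simp only [eval_sub, eval_X, eval_C]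
      exact inv_mul_cancel₀ (hw k hk)
    · intro l hl hlk
      have hk' : k ∈ (Finset.range n).erase l := Finset.mem_erase.2 ⟨Ne.symm hlk, hk⟩
      rw [eval_mul, eval_prod]
      exact mul_eq_zero_of_right _ (Finset.prod_eq_zero hk' (by simp))
    · intro h; exact absurd hk h
  have hdeg : A.natDegree < n := by
    have h1 : A.natDegree ≤ n - 1 := by
      refine (natDegree_sum_le _ _).trans ?_
      rw [Finset.fold_max_le]
      constructor
      · omega
      intro l hl
      refine (natDegree_mul_le).trans ?_
      rw [natDegree_C, zero_add]
      refine (natDegree_prod_le _ _).trans ?_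
      have : ∀ m ∈ (Finset.range n).erase l, (X - C (c m)).natDegree = 1 := fun m _ =>
        natDegree_X_sub_C _
      rw [Finset.sum_congr rfl this, Finset.sum_const, smul_eq_mul, mul_one,
        Finset.card_erase_of_mem hl, Finset.card_range]
    omega
  have hinj : Set.InjOn c ↑(Finset.range n) := by
    intro l hl m hm hlm
    by_contra h
    exact hc l (Finset.mem_range.1 (Finset.mem_coe.1 hl)) m
      (Finset.mem_range.1 (Finset.mem_coe.1 hm)) h hlm
  have hzero : A - 1 = 0 := by
    apply Polynomial.eq_zero_of_natDegree_lt_card_of_eval_eq_zero' (A - 1)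
      ((Finset.range n).image c)
    · intro i hi
      obtain ⟨k, hk, rfl⟩ := Finset.mem_image.1 hi
      simp [heval k hk]
    · rw [Finset.card_image_of_injOn hinj, Finset.card_range]
      calc (A - 1).natDegree ≤ max A.natDegree (1 : K[X]).natDegree := natDegree_sub_le _ _
        _ < n := by simp [hdeg]
  exact sub_eq_zero.1 hzero

-- partial fractions evaluated at a point
private lemma partial_fractions {K : Type*} [Field K] (n : ℕ) (hn : 1 ≤ n) (c : ℕ → K)
    (hc : ∀ l < n, ∀ m < n, l ≠ m → c l ≠ c m) (z : K) (hz : ∀ l < n, z - c l ≠ 0) :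
    (∏ l ∈ Finset.range n, (z - c l))⁻¹ =
      ∑ l ∈ Finset.range n, ((∏ m ∈ (Finset.range n).erase l, (c l - c m))⁻¹) * (z - c l)⁻¹ := by
  have hE : (∑ l ∈ Finset.range n, ((∏ m ∈ (Finset.range n).erase l, (c l - c m))⁻¹) *
      ∏ m ∈ (Finset.range n).erase l, (z - c m)) = 1 := by
    have := congrArg (Polynomial.eval z) (lagrange_one n hn c hc)
    simpa [eval_finset_sum, eval_prod] using this
  refine inv_eq_of_mul_eq_one_right ?_
  rw [Finset.mul_sum, ← hE]
  refine Finset.sum_congr rfl fun l hl => ?_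
  rw [← Finset.mul_prod_erase _ _ hl]
  have h0 := hz l (Finset.mem_range.1 hl)
  have hcalc : ((z - c l) * ∏ m ∈ (Finset.range n).erase l, (z - c m)) *
      ((∏ m ∈ (Finset.range n).erase l, (c l - c m))⁻¹ * (z - c l)⁻¹)
      = (∏ m ∈ (Finset.range n).erase l, (c l - c m))⁻¹ *
        (∏ m ∈ (Finset.range n).erase l, (z - c m)) * ((z - c l) * (z - c l)⁻¹) := by ring
  rw [hcalc, mul_inv_cancel₀ h0, mul_one]

-- sum of residues is zero when n ≥ 2
private lemma residues_sum_zero {K : Type*} [Field K] (n : ℕ) (hn : 2 ≤ n) (c : ℕ → K)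
    (hc : ∀ l < n, ∀ m < n, l ≠ m → c l ≠ c m) :
    ∑ l ∈ Finset.range n, (∏ m ∈ (Finset.range n).erase l, (c l - c m))⁻¹ = 0 := by
  have h := congrArg (fun P : K[X] => P.coeff (n - 1)) (lagrange_one n (by omega) c hc)
  simp only [finset_sum_coeff, coeff_C_mul] at h
  have hM : ∀ l ∈ Finset.range n,
      (∏ m ∈ (Finset.range n).erase l, (X - C (c m))).coeff (n - 1) = 1 := by
    intro l hl
    have hmon : (∏ m ∈ (Finset.range n).erase l, (X - C (c m))).Monic :=
      monic_prod_of_monic _ _ fun m _ => monic_X_sub_C _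
    have hnd : (∏ m ∈ (Finset.range n).erase l, (X - C (c m))).natDegree = n - 1 := by
      rw [natDegree_prod_of_monic _ _ fun m _ => monic_X_sub_C _]
      simp [Finset.card_erase_of_mem hl]
    rw [← hnd]
    exact hmon.coeff_natDegree
  rw [Finset.sum_congr rfl (fun l hl => by rw [hM l hl, mul_one])] at h
  rw [h]
  rw [coeff_one]
  simp
  omega

noncomputable def Sg (c : ℝ) : ℝ := if 0 < c then Real.pi else -Real.pi

private lemma int_uc {c : ℝ} (hc : 0 < c) :
    Integrable (fun v : ℝ => c / (c ^ 2 + v ^ 2)) ∧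
      ∫ v : ℝ, c / (c ^ 2 + v ^ 2) = Real.pi := by
  have h2 : ∀ v : ℝ, c ^ 2 + v ^ 2 ≠ 0 := fun v => by positivity
  have hrep : (fun v : ℝ => c / (c ^ 2 + v ^ 2)) =
      fun v : ℝ => c⁻¹ * (1 + (v / c) ^ 2)⁻¹ := by
    funext v
    rw [div_pow]
    rw [eq_comm]
    field_simp
  constructor
  · rw [hrep]; exact (integrable_inv_one_add_sq.comp_div hc.ne').const_mul _
  · rw [hrep, MeasureTheory.integral_const_mul,
      MeasureTheory.Measure.integral_comp_div (fun x : ℝ => (1 + x ^ 2)⁻¹) c,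
      integral_univ_inv_one_add_sq, smul_eq_mul, abs_of_pos hc]
    field_simp

private lemma int_uc' {c : ℝ} (hc : c ≠ 0) :
    Integrable (fun v : ℝ => c / (c ^ 2 + v ^ 2)) ∧
      ∫ v : ℝ, c / (c ^ 2 + v ^ 2) = Sg c := by
  rcases lt_or_gt_of_ne hc with hneg | hpos
  · have h := int_uc (c := -c) (by linarith)
    have hrep : (fun v : ℝ => c / (c ^ 2 + v ^ 2)) =
        fun v : ℝ => -((-c) / ((-c) ^ 2 + v ^ 2)) := by funext v; ring_nf
    constructor
    · rw [hrep]; exact h.1.neg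
    · rw [hrep, MeasureTheory.integral_neg, h.2, Sg, if_neg (by linarith)]
  · have h := int_uc hpos
    exact ⟨h.1, h.2.trans (by rw [Sg, if_pos hpos])⟩

private lemma int_inv_sq_add {c : ℝ} (hc : c ≠ 0) :
    Integrable (fun v : ℝ => (c ^ 2 + v ^ 2)⁻¹) := by
  have habs : (0:ℝ) < |c| := abs_pos.2 hc
  have h := (int_uc habs).1
  have hrep : (fun v : ℝ => (c ^ 2 + v ^ 2)⁻¹) =
      fun v : ℝ => |c|⁻¹ * (|c| / (|c| ^ 2 + v ^ 2)) := by
    funext v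
    rw [sq_abs]
    field_simp
  rw [hrep]
  exact h.const_mul _

-- complex inverse decomposition
private lemma inv_rep (c : ℝ) (hc : c ≠ 0) (v : ℝ) :
    ((c : ℂ) + v * Complex.I)⁻¹ =
      ((c / (c ^ 2 + v ^ 2) : ℝ) : ℂ) + ((-v / (c ^ 2 + v ^ 2) : ℝ) : ℂ) * Complex.I := by
  have h2 : c ^ 2 + v ^ 2 ≠ 0 := by positivity
  refine inv_eq_of_mul_eq_one_right ?_
  rw [Complex.ext_iff]
  constructor
  · simp only [Complex.mul_re, Complex.add_re, Complex.add_im, Complex.ofReal_re,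
      Complex.ofReal_im, Complex.mul_im, Complex.I_re, Complex.I_im, Complex.one_re]
    field_simp
    ring
  · simp only [Complex.mul_re, Complex.add_re, Complex.add_im, Complex.ofReal_re,
      Complex.ofReal_im, Complex.mul_im, Complex.I_re, Complex.I_im, Complex.one_im]
    field_simp
    ring

private lemma pair_integral {c d : ℝ} (hc : c ≠ 0) (hd : d ≠ 0) :
    Integrable (fun v : ℝ => ((c : ℂ) + v * Complex.I)⁻¹ - ((d : ℂ) + v * Complex.I)⁻¹) ∧
      ∫ v : ℝ, (((c : ℂ) + v * Complex.I)⁻¹ - ((d : ℂ) + v * Complex.I)⁻¹) =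
        ((Sg c - Sg d : ℝ) : ℂ) := by
  set U : ℝ → ℝ := fun v => c / (c ^ 2 + v ^ 2) - d / (d ^ 2 + v ^ 2) with hU
  set W : ℝ → ℝ := fun v => -v / (c ^ 2 + v ^ 2) - -v / (d ^ 2 + v ^ 2) with hW
  have hc2 : ∀ v : ℝ, c ^ 2 + v ^ 2 ≠ 0 := fun v => by positivity
  have hd2 : ∀ v : ℝ, d ^ 2 + v ^ 2 ≠ 0 := fun v => by positivity
  have hrep : (fun v : ℝ => ((c : ℂ) + v * Complex.I)⁻¹ - ((d : ℂ) + v * Complex.I)⁻¹) =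
      fun v : ℝ => ((U v : ℝ) : ℂ) + ((W v : ℝ) : ℂ) * Complex.I := by
    funext v
    rw [inv_rep c hc v, inv_rep d hd v, hU, hW]
    push_cast
    ring
  -- integrability of U
  have hUint : Integrable U := (int_uc' hc).1.sub (int_uc' hd).1
  have hUval : ∫ v : ℝ, U v = Sg c - Sg d := by
    rw [hU, MeasureTheory.integral_sub (int_uc' hc).1 (int_uc' hd).1,
      (int_uc' hc).2, (int_uc' hd).2]
  -- integrability of W
  have hWcont : Continuous W := by
    apply Continuous.sub
    · exact (continuous_neg.comp continuous_id).div (by continuity) hc2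
    · exact (continuous_neg.comp continuous_id).div (by continuity) hd2
  have hWbound : ∀ v : ℝ, ‖W v‖ ≤ (|c ^ 2 - d ^ 2| / (2 * |c|)) * (d ^ 2 + v ^ 2)⁻¹ := by
    intro v
    have h1 : W v = v * (c ^ 2 - d ^ 2) / ((c ^ 2 + v ^ 2) * (d ^ 2 + v ^ 2)) := by
      rw [hW]; field_simp; ring
    rw [Real.norm_eq_abs, h1, abs_div, abs_mul]
    rw [abs_of_pos (by positivity : (0:ℝ) < (c ^ 2 + v ^ 2) * (d ^ 2 + v ^ 2))]
    rw [div_le_iff₀ (by positivity)]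
    have hvc : 2 * |c| * |v| ≤ c ^ 2 + v ^ 2 := by
      nlinarith [sq_nonneg (|c| - |v|), sq_abs c, sq_abs v]
    have habs : (0:ℝ) < |c| := abs_pos.2 hc
    have h3 : (0:ℝ) ≤ |c ^ 2 - d ^ 2| := abs_nonneg _
    have h4 : (0:ℝ) < d ^ 2 + v ^ 2 := by positivity
    calc |v| * |c ^ 2 - d ^ 2| = (|c ^ 2 - d ^ 2| / (2 * |c|)) * (2 * |c| * |v|) := by
          field_simp
      _ ≤ (|c ^ 2 - d ^ 2| / (2 * |c|)) * (c ^ 2 + v ^ 2) := by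
          apply mul_le_mul_of_nonneg_left hvc (by positivity)
      _ = (|c ^ 2 - d ^ 2| / (2 * |c|)) * (d ^ 2 + v ^ 2)⁻¹ *
            ((c ^ 2 + v ^ 2) * (d ^ 2 + v ^ 2)) := by
          field_simp
  have hWint : Integrable W := by
    refine Integrable.mono' ((int_inv_sq_add hd).const_mul (|c ^ 2 - d ^ 2| / (2 * |c|)))
      hWcont.aestronglyMeasurable ?_
    exact Filter.Eventually.of_forall hWbound
  have hWodd : ∀ v : ℝ, W (-v) = -W v := by
    intro v; rw [hW]; simp; ring
  have hWval : ∫ v : ℝ, W v = 0 := by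
    have h1 : ∫ v : ℝ, W (-v) = ∫ v : ℝ, W v := integral_neg_eq_self W volume
    rw [funext hWodd] at h1
    rw [MeasureTheory.integral_neg] at h1
    linarith
  -- assemble
  have hI1 : Integrable (fun v : ℝ => ((U v : ℝ) : ℂ)) := hUint.ofReal
  have hI2 : Integrable (fun v : ℝ => ((W v : ℝ) : ℂ) * Complex.I) :=
    hWint.ofReal.mul_const _
  constructor
  · rw [hrep]; exact hI1.add hI2
  · have e1 : (∫ a : ℝ, ((U a : ℝ) : ℂ)) = (((∫ a : ℝ, U a) : ℝ) : ℂ) := integral_ofReal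
    have e2 : (∫ a : ℝ, ((W a : ℝ) : ℂ)) = (((∫ a : ℝ, W a) : ℝ) : ℂ) := integral_ofReal
    rw [hrep, MeasureTheory.integral_add hI1 hI2, MeasureTheory.integral_mul_const,
      e1, e2, hUval, hWval]
    simp

private lemma Q_fact (κ : ℕ) (hκ : 2 ≤ κ) (a : ℕ → ℝ) (Q : Polynomial ℝ)
    (hQ : Q = -(X ^ κ) + ∑ α ∈ Finset.range κ, C (a α) * X ^ α)
    (q : ℕ → ℝ) (hroot : ∀ l < κ, Q.eval (q l) = 0)
    (hinj : ∀ l < κ, ∀ m < κ, l ≠ m → q l ≠ q m) :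
    Q = -(∏ l ∈ Finset.range κ, (X - C (q l))) := by
  classical
  set P : Polynomial ℝ := ∏ l ∈ Finset.range κ, (X - C (q l)) with hP
  have hPmonic : P.Monic := monic_prod_of_monic _ _ fun l _ => monic_X_sub_C _
  have hPdeg : P.natDegree = κ := by
    rw [hP, natDegree_prod_of_monic _ _ fun l _ => monic_X_sub_C _]
    simp
  have hcoeffQ : ∀ m, κ ≤ m → Q.coeff m = -(if m = κ then 1 else 0) := by
    intro m hm
    rw [hQ, coeff_add, coeff_neg, coeff_X_pow, finset_sum_coeff]
    rw [Finset.sum_eq_zero, add_zero]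
    intro α hα
    have : α < κ := Finset.mem_range.1 hα
    rw [coeff_C_mul, coeff_X_pow, if_neg (by omega), mul_zero]
  have hD : (Q + P).degree < (κ : ℕ) := by
    rw [degree_lt_iff_coeff_zero]
    intro m hm
    rw [coeff_add, hcoeffQ m hm]
    rcases eq_or_lt_of_le hm with rfl | hlt
    · rw [if_pos rfl, ← hPdeg, hPmonic.coeff_natDegree]
      ring
    · rw [if_neg (by omega), coeff_eq_zero_of_natDegree_lt (by omega)]
      ring
  have hndeg : (Q + P).natDegree < κ := by
    by_cases h : Q + P = 0
    · rw [h]; simp; omega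
    · exact (natDegree_lt_iff_degree_lt h).2 hD
  have hinjOn : Set.InjOn q ↑(Finset.range κ) := by
    intro l hl m hm hlm
    by_contra h
    exact hinj l (Finset.mem_range.1 (Finset.mem_coe.1 hl)) m
      (Finset.mem_range.1 (Finset.mem_coe.1 hm)) h hlm
  have hzero : Q + P = 0 := by
    apply Polynomial.eq_zero_of_natDegree_lt_card_of_eval_eq_zero' (Q + P)
      ((Finset.range κ).image q)
    · intro i hi
      obtain ⟨k, hk, rfl⟩ := Finset.mem_image.1 hi
      rw [eval_add, hroot k (Finset.mem_range.1 hk), zero_add, hP, eval_prod]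
      exact Finset.prod_eq_zero hk (by simp)
    · rw [Finset.card_image_of_injOn hinjOn, Finset.card_range]
      exact hndeg
  exact eq_neg_of_add_eq_zero_left hzero

private lemma Q_deriv (κ : ℕ) (q : ℕ → ℝ) (Q : Polynomial ℝ)
    (hfact : Q = -(∏ l ∈ Finset.range κ, (X - C (q l)))) :
    ∀ l < κ, Q.derivative.eval (q l) = -(∏ m ∈ (Finset.range κ).erase l, (q l - q m)) := by
  intro l hl
  have hmem : l ∈ Finset.range κ := Finset.mem_range.2 hl
  have h1 : Q = -((X - C (q l)) * ∏ m ∈ (Finset.range κ).erase l, (X - C (q m))) := by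
    rw [hfact, ← Finset.mul_prod_erase (Finset.range κ) (fun m => (X : Polynomial ℝ) - C (q m)) hmem]
  rw [h1, derivative_neg, derivative_mul, derivative_X_sub_C, one_mul]
  rw [eval_neg, eval_add, eval_mul, eval_sub, eval_X, eval_C, sub_self, zero_mul, add_zero,
    eval_prod]
  simp

/-- For a real polynomial `Q(f) = -f^κ + Σ_{α<κ} a_α f^α` of degree `κ ≥ 2`
with `κ` distinct real roots `q^κ < ⋯ < q^1` (here `q l` denotes `q^{l+1}`), fix
`j ∈ {1,…,κ-1}` and `p ∈ (q^{j+1}, q^j)`. Then `v ↦ (Q(p + i v))⁻¹` is integrable on ℝ and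
`∫_{-∞}^{∞} (Q(p+iv))⁻¹ dv = -2π Σ_{l=1}^{j} 1/Q'(q^l)`. -/
theorem zeroHopf_vertical_line_integral
    (κ : ℕ) (hκ : 2 ≤ κ) (a : ℕ → ℝ) (Q : Polynomial ℝ)
    (hQ : Q = -(X ^ κ) + ∑ α ∈ Finset.range κ, C (a α) * X ^ α)
    (q : ℕ → ℝ)
    (hroot : ∀ l < κ, Q.eval (q l) = 0)
    (hord : ∀ l m : ℕ, l < m → m < κ → q m < q l)
    (j : ℕ) (hj1 : 1 ≤ j) (hjκ : j ≤ κ - 1)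
    (p : ℝ) (hp1 : q j < p) (hp2 : p < q (j - 1)) :
    Integrable (fun v : ℝ => ((Polynomial.aeval ((p : ℂ) + (v : ℂ) * Complex.I)) Q)⁻¹) ∧
      ∫ v : ℝ, ((Polynomial.aeval ((p : ℂ) + (v : ℂ) * Complex.I)) Q)⁻¹ =
        ((-2 * Real.pi * ∑ l ∈ Finset.range j, (Q.derivative.eval (q l))⁻¹ : ℝ) : ℂ) := by
  classical
  have hκ1 : 1 ≤ κ := by omega
  have hjκ' : j < κ := by omega
  have hinj : ∀ l < κ, ∀ m < κ, l ≠ m → q l ≠ q m := by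
    intro l hl m hm hlm
    rcases lt_or_gt_of_ne hlm with h | h
    · exact (hord l m h hm).ne'
    · exact (hord m l h hl).ne
  have hfact := Q_fact κ hκ a Q hQ q hroot hinj
  have hder := Q_deriv κ q Q hfact
  -- position of p
  have hpneg : ∀ l, l < j → p - q l < 0 := by
    intro l hl
    have h1 : q (j - 1) ≤ q l := by
      rcases eq_or_lt_of_le (Nat.le_sub_one_of_lt hl) with h | h
      · rw [h]
      · exact (hord l (j - 1) h (by omega)).le
    linarith
  have hppos : ∀ l, j ≤ l → l < κ → 0 < p - q l := by
    intro l hl hlκ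
    have h1 : q l ≤ q j := by
      rcases eq_or_lt_of_le hl with h | h
      · rw [← h]
      · exact (hord j l h hlκ).le
    linarith
  have hpne : ∀ l, l < κ → p - q l ≠ 0 := by
    intro l hl
    rcases lt_or_ge l j with h | h
    · exact (hpneg l h).ne
    · exact (hppos l h hl).ne'
  -- nonvanishing products
  have hwne : ∀ l < κ, (∏ m ∈ (Finset.range κ).erase l, (q l - q m)) ≠ 0 := by
    intro l hl
    refine Finset.prod_ne_zero_iff.2 fun m hm => ?_
    exact sub_ne_zero.2 (hinj l hl m (Finset.mem_range.1 (Finset.mem_of_mem_erase hm))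
      (Ne.symm (Finset.ne_of_mem_erase hm)))
  -- real residue sum is zero
  have hres0 : ∑ l ∈ Finset.range κ, (Q.derivative.eval (q l))⁻¹ = 0 := by
    rw [Finset.sum_congr rfl fun l hl => by
      rw [hder l (Finset.mem_range.1 hl), inv_neg]]
    rw [Finset.sum_neg_distrib, residues_sum_zero κ hκ q hinj, neg_zero]
  -- complex nodes
  set cC : ℕ → ℂ := fun l => ((q l : ℝ) : ℂ) with hcC
  have hinjC : ∀ l < κ, ∀ m < κ, l ≠ m → cC l ≠ cC m := by
    intro l hl m hm hlm h
    apply hinj l hl m hm hlm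
    simp only [hcC] at h
    exact_mod_cast h
  set R : ℕ → ℂ := fun l => ((Q.derivative.eval (q l) : ℝ) : ℂ)⁻¹ with hR
  set g : ℕ → ℝ → ℂ := fun l v => (((p - q l : ℝ) : ℂ) + v * Complex.I)⁻¹ with hg
  -- pointwise partial fraction expansion
  have hpoint : ∀ v : ℝ, ((Polynomial.aeval ((p : ℂ) + (v : ℂ) * Complex.I)) Q)⁻¹ =
      ∑ l ∈ Finset.range κ, R l * g l v := by
    intro v
    set z : ℂ := (p : ℂ) + (v : ℂ) * Complex.I with hz'
    have hz : ∀ l < κ, z - cC l ≠ 0 := by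
      intro l hl h
      apply hpne l hl
      have := congrArg Complex.re h
      simpa [hz', hcC] using this
    have hQz : (Polynomial.aeval z) Q = -∏ l ∈ Finset.range κ, (z - cC l) := by
      rw [hfact, map_neg, map_prod]
      congr 1
      refine Finset.prod_congr rfl fun l _ => ?_
      simp [hcC]
    rw [hQz, inv_neg, partial_fractions κ hκ1 cC hinjC z hz, ← Finset.sum_neg_distrib]
    refine Finset.sum_congr rfl fun l hl => ?_
    have hl' := Finset.mem_range.1 hl
    have e1 : (∏ m ∈ (Finset.range κ).erase l, (cC l - cC m)) =
        ((∏ m ∈ (Finset.range κ).erase l, (q l - q m) : ℝ) : ℂ) := by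
      push_cast [hcC]; rfl
    have e2 : z - cC l = ((p - q l : ℝ) : ℂ) + (v : ℂ) * Complex.I := by
      rw [hz', hcC]; push_cast; ring
    simp only [hR, hg]
    rw [e1, e2, hder l hl']
    push_cast
    ring
  -- sum of complex residues is zero
  have hRsum : ∑ l ∈ Finset.range κ, R l = 0 := by
    have : ∑ l ∈ Finset.range κ, R l =
        ((∑ l ∈ Finset.range κ, (Q.derivative.eval (q l))⁻¹ : ℝ) : ℂ) := by
      rw [hR]; push_cast; rfl
    rw [this, hres0, Complex.ofReal_zero]
  -- pointwise with pairing
  have hpoint2 : ∀ v : ℝ, ((Polynomial.aeval ((p : ℂ) + (v : ℂ) * Complex.I)) Q)⁻¹ =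
      ∑ l ∈ Finset.range κ, R l * (g l v - g 0 v) := by
    intro v
    rw [hpoint v]
    rw [Finset.sum_congr rfl fun l _ => mul_sub (R l) (g l v) (g 0 v)]
    rw [Finset.sum_sub_distrib, ← Finset.sum_mul, hRsum, zero_mul, sub_zero]
  have hfun : (fun v : ℝ => ((Polynomial.aeval ((p : ℂ) + (v : ℂ) * Complex.I)) Q)⁻¹) =
      fun v : ℝ => ∑ l ∈ Finset.range κ, R l * (g l v - g 0 v) := funext hpoint2
  have h0j : (0 : ℕ) < j := hj1
  have hpair : ∀ l, l < κ →
      Integrable (fun v : ℝ => g l v - g 0 v) ∧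
        ∫ v : ℝ, (g l v - g 0 v) = ((Sg (p - q l) - Sg (p - q 0) : ℝ) : ℂ) :=
    fun l hl => pair_integral (hpne l hl) (hpne 0 (by omega))
  constructor
  · rw [hfun]
    exact integrable_finset_sum _ fun l hl =>
      ((hpair l (Finset.mem_range.1 hl)).1).const_mul _
  · rw [hfun, integral_finset_sum _ fun l hl =>
      ((hpair l (Finset.mem_range.1 hl)).1).const_mul _]
    rw [Finset.sum_congr rfl fun l hl => by
      rw [MeasureTheory.integral_const_mul, (hpair l (Finset.mem_range.1 hl)).2]]
    -- evaluate the signs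
    have hSg : ∀ l, l < κ → Sg (p - q l) = if l < j then -Real.pi else Real.pi := by
      intro l hl
      rcases lt_or_ge l j with h | h
      · rw [if_pos h, Sg, if_neg (not_lt.2 (hpneg l h).le)]
      · rw [if_neg (not_lt.2 h), Sg, if_pos (hppos l h hl)]
    have hSg0 : Sg (p - q 0) = -Real.pi := by
      rw [hSg 0 (by omega), if_pos h0j]
    have hsplit : Finset.range κ = Finset.range j ∪ Finset.Ico j κ := by
      simp only [Finset.range_eq_Ico]
      rw [Finset.Ico_union_Ico_eq_Ico (by omega) (by omega)]
    rw [hsplit, Finset.sum_union (by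
      rw [Finset.range_eq_Ico]
      exact Finset.Ico_disjoint_Ico_consecutive 0 j κ)]
    have hz1 : ∑ l ∈ Finset.range j, R l * ((Sg (p - q l) - Sg (p - q 0) : ℝ) : ℂ) = 0 := by
      refine Finset.sum_eq_zero fun l hl => ?_
      have hl' := Finset.mem_range.1 hl
      rw [hSg l (by omega), if_pos hl', hSg0]
      simp
    have hz2 : ∑ l ∈ Finset.Ico j κ, R l * ((Sg (p - q l) - Sg (p - q 0) : ℝ) : ℂ) =
        (∑ l ∈ Finset.Ico j κ, R l) * ((2 * Real.pi : ℝ) : ℂ) := by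
      rw [Finset.sum_mul]
      refine Finset.sum_congr rfl fun l hl => ?_
      obtain ⟨hjl, hlκ⟩ := Finset.mem_Ico.1 hl
      rw [hSg l hlκ, if_neg (not_lt.2 hjl), hSg0]
      push_cast
      ring
    have hIco : ∑ l ∈ Finset.Ico j κ, R l = -∑ l ∈ Finset.range j, R l := by
      have := hRsum
      rw [hsplit, Finset.sum_union (by
        rw [Finset.range_eq_Ico]
        exact Finset.Ico_disjoint_Ico_consecutive 0 j κ)] at this
      linear_combination this
    rw [hz1, hz2, hIco, zero_add]
    have hA : ∑ l ∈ Finset.range j, R l =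
        ((∑ l ∈ Finset.range j, (Q.derivative.eval (q l))⁻¹ : ℝ) : ℂ) := by
      rw [hR]; push_cast; rfl
    rw [hA]
    push_cast
    ring
end

section
/- Let Q(f) = −f^κ + Σ_{α=0}^{κ−1} a_α f^α be a real polynomial of degree κ ≥ 2 whose κ roots are real and distinct, regarded as a polynomial over ℂ. Then every periodic solution of x′ = Q(x) in the complex plane is constant: if x : ℝ → ℂ satisfies x′(t) = Q(x(t)) for all t ∈ ℝ and there exists T > 0 with x(t + T) = x(t) for all t ∈ ℝ, then x is a constant function. -/
/-!
Since `-Q` is monic of degree `κ` and vanishes at the `κ` distinct real numbers `q l`, it is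
the nodal polynomial `∏ (X - q l)`. A solution that ever meets a root stays at that equilibrium
forever, by uniqueness for the locally Lipschitz field `Q`. Otherwise, the partial fraction
expansion `1 / ∏ (z - q l) = Σ w l / (z - q l)` has real weights `w l`, so
`Σ w l * log ‖x t - q l‖` has derivative `-1` along the solution, which is impossible for a
periodic one.
-/

open Polynomial Finset Lagrange

theorem HasDerivAt.log_norm {w : ℝ → ℂ} {w' : ℂ} {t : ℝ} (hw : HasDerivAt w w' t)
    (h : w t ≠ 0) : HasDerivAt (fun t => Real.log ‖w t‖) (w' / w t).re t := by
  have hre : HasDerivAt (fun t => (w t).re) w'.re t :=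
    Complex.reCLM.hasFDerivAt.comp_hasDerivAt t hw
  have him : HasDerivAt (fun t => (w t).im) w'.im t :=
    Complex.imCLM.hasFDerivAt.comp_hasDerivAt t hw
  have hnormSq : HasDerivAt (fun t => Complex.normSq (w t))
      (w'.re * (w t).re + (w t).re * w'.re + (w'.im * (w t).im + (w t).im * w'.im)) t := by
    simpa only [Complex.normSq_apply] using (hre.fun_mul hre).fun_add (him.fun_mul him)
  have hpos : 0 < Complex.normSq (w t) := Complex.normSq_pos.mpr h
  have hlog : (fun t => Real.log ‖w t‖) = fun t => Real.log (Complex.normSq (w t)) / 2 := by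
    ext t
    rw [Complex.normSq_eq_norm_sq, Real.log_pow]
    ring
  rw [hlog]
  refine ((hnormSq.log hpos.ne').div_const 2).congr_deriv ?_
  rw [Complex.div_re]
  field_simp
  ring

namespace Lagrange

variable {ι : Type*} {s : Finset ι}

theorem ofReal_nodalWeight [DecidableEq ι] (v : ι → ℝ) (i : ι) :
    ((nodalWeight s v i : ℝ) : ℂ) = nodalWeight s (fun j => (v j : ℂ)) i := by
  simp [nodalWeight]

theorem aeval_nodal {R A : Type*} [CommRing R] [CommRing A] [Algebra R A] (v : ι → R) (z : A) :
    aeval z (nodal s v) = eval z (nodal s fun i => algebraMap R A (v i)) := by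
  simp [nodal, map_prod, eval_prod]

theorem inv_eval_nodal [DecidableEq ι] {F : Type*} [Field F] {v : ι → F} (hvs : Set.InjOn v s)
    (hs : s.Nonempty) {z : F} (hz : ∀ i ∈ s, z ≠ v i) :
    (eval z (nodal s v))⁻¹ = ∑ i ∈ s, nodalWeight s v i * (z - v i)⁻¹ := by
  have h := eval_interpolate_not_at_node 1 hz
  rw [interpolate_one hvs hs, eval_one] at h
  simpa using (eq_inv_of_mul_eq_one_right h.symm).symm

theorem eq_nodal_of_monic {F : Type*} [Field F] {v : ι → F} {p : F[X]} (hvs : Set.InjOn v s)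
    (hp : p.Monic) (hdeg : p.natDegree = #s) (hroots : ∀ i ∈ s, p.eval (v i) = 0) :
    p = nodal s v := by
  refine eq_of_degree_sub_lt_of_eval_index_eq s hvs ?_ fun i hi => by
    rw [hroots i hi, eval_nodal_at_node hi]
  have hdeg' : p.degree = #s := by rw [degree_eq_natDegree hp.ne_zero, hdeg]
  calc (p - nodal s v).degree < p.degree :=
        degree_sub_lt_left (by rw [hdeg', degree_nodal]) hp.ne_zero
          (by rw [hp.leadingCoeff, nodal_monic.leadingCoeff])
    _ = #s := hdeg'

end Lagrange

theorem Polynomial.degree_sum_range_C_mul_X_pow_lt {R : Type*} [Semiring R] (n : ℕ)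
    (f : ℕ → R) : degree (∑ i ∈ range n, C (f i) * X ^ i) < n :=
  (degree_sum_le _ _).trans_lt <|
    (Finset.sup_lt_iff <| WithBot.bot_lt_coe n).2 fun _ hk =>
      (degree_C_mul_X_pow_le _ _).trans_lt <| WithBot.coe_lt_coe.2 (mem_range.1 hk)

theorem ODE_solution_eq_equilibrium {E : Type*} [NormedAddCommGroup E] [NormedSpace ℝ E]
    {f : E → E} (hf : LocallyLipschitz f) {x : ℝ → E} (hx : ∀ t, HasDerivAt x (f (x t)) t)
    {z : E} (hz : f z = 0) {t₀ : ℝ} (h₀ : x t₀ = z) (t : ℝ) : x t = z := by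
  have hcont : Continuous x := continuous_iff_continuousAt.2 fun t => (hx t).continuousAt
  have hopen : IsOpen {t | x t = z} := by
    refine isOpen_iff_mem_nhds.2 fun t₁ (h₁ : x t₁ = z) => ?_
    obtain ⟨K, U, hU, hlip⟩ := hf z
    have hxU : ∀ᶠ t in nhds t₁, x t ∈ U :=
      hcont.continuousAt.preimage_mem_nhds (h₁ ▸ hU)
    exact ODE_solution_unique_of_eventually (v := fun _ => f) (s := fun _ => U)
      (g := fun _ => z) (.of_forall fun _ => hlip) (hxU.mono fun t ht => ⟨hx t, ht⟩)
      (.of_forall fun t => ⟨hz ▸ hasDerivAt_const t z, mem_of_mem_nhds hU⟩) h₁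
  have hclopen : IsClopen {t | x t = z} := ⟨isClosed_eq hcont continuous_const, hopen⟩
  exact (hclopen.eq_univ ⟨t₀, h₀⟩).symm.subset (Set.mem_univ t)

section NodalLogPotential

variable {ι : Type*} [DecidableEq ι] {s : Finset ι} {v : ι → ℝ}

/-- The real part of a primitive of `1 / nodal s v`; unlike the primitive itself, it needs no
branch of the logarithm. -/
noncomputable def nodalLogPotential (s : Finset ι) (v : ι → ℝ) (z : ℂ) : ℝ :=
  ∑ i ∈ s, nodalWeight s v i * Real.log ‖z - v i‖

theorem hasDerivAt_nodalLogPotential (hvs : Set.InjOn v s) (hs : s.Nonempty) {x : ℝ → ℂ}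
    {x' : ℂ} {t : ℝ} (hx : HasDerivAt x x' t) (havoid : ∀ i ∈ s, x t ≠ v i) :
    HasDerivAt (fun t => nodalLogPotential s v (x t))
      (x' / eval (x t) (nodal s (fun i => (v i : ℂ)))).re t := by
  have hvs' : Set.InjOn (fun i => (v i : ℂ)) s := Complex.ofReal_injective.comp_injOn hvs
  have hterm : ∀ i ∈ s, HasDerivAt (fun t => nodalWeight s v i * Real.log ‖x t - v i‖)
      (nodalWeight s v i * (x' / (x t - v i)).re) t := fun i hi =>
    ((hx.sub_const _).log_norm (sub_ne_zero.2 (havoid i hi))).const_mul _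
  refine (HasDerivAt.fun_sum hterm).congr_deriv ?_
  rw [div_eq_mul_inv, inv_eval_nodal hvs' hs havoid, mul_sum, Complex.re_sum]
  refine sum_congr rfl fun i _ => ?_
  rw [← ofReal_nodalWeight, mul_left_comm, ← div_eq_mul_inv]
  exact (Complex.re_ofReal_mul _ _).symm

theorem Function.Periodic.eq_zero_of_hasDerivAt_mul_eval_nodal (hvs : Set.InjOn v s)
    (hs : s.Nonempty) {c : ℂ} (hc : c.re ≠ 0) {x : ℝ → ℂ}
    (hx : ∀ t, HasDerivAt x (c * Polynomial.eval (x t) (nodal s (fun i => (v i : ℂ)))) t)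
    (havoid : ∀ t, ∀ i ∈ s, x t ≠ v i) {T : ℝ} (hper : Function.Periodic x T) :
    T = 0 := by
  have hnodal : ∀ t, Polynomial.eval (x t) (nodal s (fun i => (v i : ℂ))) ≠ 0 := fun t =>
    eval_nodal_not_at_node (havoid t)
  have hderiv : ∀ t, HasDerivAt (fun t => nodalLogPotential s v (x t) - c.re * t) 0 t := by
    intro t
    have h := (hasDerivAt_nodalLogPotential hvs hs (hx t) (havoid t)).sub
      ((hasDerivAt_id t).const_mul c.re)
    rwa [mul_div_cancel_right₀ _ (hnodal t), mul_one, sub_self] at h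
  have hconst := is_const_of_deriv_eq_zero (fun t => (hderiv t).differentiableAt)
    (fun t => (hderiv t).deriv) T 0
  rw [hper.eq, mul_zero, sub_zero] at hconst
  simpa [hc] using hconst

end NodalLogPotential

/-- For a real polynomial `Q(f) = -f^κ + Σ_{α<κ} a_α f^α` of degree `κ ≥ 2`
with `κ` distinct real roots (here `q l`, `l < κ`, strictly decreasing), every periodic
solution of `x' = Q(x)` in the complex plane is constant. -/
theorem zeroHopf_no_cycles
    (κ : ℕ) (hκ : 2 ≤ κ) (a : ℕ → ℝ) (Q : Polynomial ℝ)
    (hQ : Q = -(X ^ κ) + ∑ α ∈ Finset.range κ, C (a α) * X ^ α)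
    (q : ℕ → ℝ)
    (hroot : ∀ l < κ, Q.eval (q l) = 0)
    (hord : ∀ l m : ℕ, l < m → m < κ → q m < q l)
    (x : ℝ → ℂ)
    (hx : ∀ t : ℝ, HasDerivAt x ((Polynomial.aeval (x t)) Q) t)
    (T : ℝ) (hT : 0 < T) (hper : ∀ t : ℝ, x (t + T) = x t) :
    ∃ c : ℂ, ∀ t : ℝ, x t = c := by
  have hinj : Set.InjOn q (range κ) :=
    StrictAntiOn.injOn fun l _ m hm hlm => hord l m hlm (mem_range.1 hm)
  have hnegQ : -Q = X ^ κ - ∑ α ∈ range κ, C (a α) * X ^ α := by rw [hQ]; ring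
  have hlow := degree_sum_range_C_mul_X_pow_lt κ a
  have hdeg : (-Q).natDegree = κ := natDegree_eq_of_degree_eq_some <| by
    rw [hnegQ, degree_sub_eq_left_of_degree_lt (by rwa [degree_X_pow]), degree_X_pow]
  have hfactor : -Q = nodal (range κ) q :=
    eq_nodal_of_monic hinj (hnegQ ▸ monic_X_pow_sub hlow) (by rw [hdeg, card_range])
      fun l hl => by rw [eval_neg, hroot l (mem_range.1 hl), neg_zero]
  have hx' : ∀ t, HasDerivAt x (-1 * eval (x t) (nodal (range κ) fun l => (q l : ℂ))) t := by
    intro t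
    have h := hx t
    rwa [← neg_neg Q, hfactor, map_neg, aeval_nodal, Complex.coe_algebraMap, ← neg_one_mul] at h
  by_cases hhit : ∃ t₀, ∃ l ∈ range κ, x t₀ = q l
  · obtain ⟨t₀, l, hl, h₀⟩ := hhit
    refine ⟨q l, ODE_solution_eq_equilibrium (Q.contDiff_aeval 1).locallyLipschitz hx ?_ h₀⟩
    rw [← Complex.coe_algebraMap, aeval_algebraMap_apply, coe_aeval_eq_eval,
      hroot l (mem_range.1 hl), map_zero]
  · push Not at hhit
    exact absurd (Function.Periodic.eq_zero_of_hasDerivAt_mul_eval_nodal hinj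
      (nonempty_range_iff.2 (by omega)) (by norm_num) hx' hhit hper) hT.ne'
end

section
/- Let κ be a natural number with κ ≥ 2, let T ≥ 0, and let w : ℝ → ℝ be a function such that for every s ∈ [0, T] one has w(s) > 0 and w′(s) = −w(s)^{2−κ} (integer power, with exponent 2−κ ≤ 0). Then T < w(0)^{κ−1}/(κ−1). In particular, every positive solution of w′ = −w^{2−κ} reaches 0 in finite forward time; this is the finite-time blowup along the invariant manifolds at infinity (Corollary 2.5 of the paper, after the normal form reduces the flow at infinity to this scalar equation). -/
/-! The Bernoulli-type substitution `v = w ^ (κ - 1)` linearises `w' = -w ^ (2 - κ)` into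
`v' = -(κ - 1)`. Hence `w T ^ (κ - 1) = w 0 ^ (κ - 1) - (κ - 1) T`, and positivity of `w T`
bounds `T`. -/

theorem HasDerivAt.pow_of_eq_mul_zpow {𝕜 : Type*} [NontriviallyNormedField 𝕜] {w : 𝕜 → 𝕜}
    {s c : 𝕜} (n : ℕ) (hw : w s ≠ 0) (h : HasDerivAt w (c * w s ^ (1 - (n : ℤ))) s) :
    HasDerivAt (fun t => w t ^ n) (n * c) s := by
  refine (h.fun_pow n).congr_deriv ?_
  rcases n.eq_zero_or_pos with rfl | hn
  · simp
  · have hcancel : w s ^ (n - 1) * w s ^ (1 - (n : ℤ)) = 1 := by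
      rw [← zpow_natCast, ← zpow_add₀ hw, Nat.cast_pred hn]
      simp
    linear_combination ((n : 𝕜) * c) * hcancel

theorem pow_eq_of_forall_hasDerivAt_mul_zpow {w : ℝ → ℝ} {a b c : ℝ} (n : ℕ) (hab : a ≤ b)
    (h : ∀ s ∈ Set.Icc a b, w s ≠ 0 ∧ HasDerivAt w (c * w s ^ (1 - (n : ℤ))) s) :
    w b ^ n = w a ^ n + n * c * (b - a) := by
  have hderiv (s) (hs : s ∈ Set.Icc a b) : HasDerivAt (fun t => w t ^ n) (n * c) s :=
    (h s hs).2.pow_of_eq_mul_zpow n (h s hs).1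
  have hline (s) : HasDerivAt (fun t => w a ^ n + n * c * (t - a)) (n * c) s := by
    simpa using ((hasDerivAt_id s).sub_const a).const_mul (n * c) |>.const_add (w a ^ n)
  refine eq_of_has_deriv_right_eq
    (fun s hs => (hderiv s (Set.Ico_subset_Icc_self hs)).hasDerivWithinAt)
    (fun s _ => (hline s).hasDerivWithinAt)
    (fun s hs => (hderiv s hs).continuousAt.continuousWithinAt)
    (fun s _ => (hline s).continuousAt.continuousWithinAt) (by simp) b (Set.right_mem_Icc.2 hab)

/-- Let `κ ≥ 2`, `T ≥ 0`, and `w : ℝ → ℝ` be such that for every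
`s ∈ [0, T]` one has `w s > 0` and `w'(s) = -(w s)^{2-κ}` (integer power). Then
`T < w(0)^{κ-1}/(κ-1)`: positive solutions of `w' = -w^{2-κ}` reach `0` in finite
forward time (finite-time blowup along the invariant manifolds at infinity). -/
theorem zeroHopf_finite_time_blowup
    (κ : ℕ) (hκ : 2 ≤ κ) (T : ℝ) (hT : 0 ≤ T) (w : ℝ → ℝ)
    (hw : ∀ s ∈ Set.Icc (0 : ℝ) T,
      0 < w s ∧ HasDerivAt w (-(w s ^ ((2 : ℤ) - κ))) s) :
    T < w 0 ^ (κ - 1) / ((κ : ℝ) - 1) := by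
  have hκ₁ : 1 ≤ κ := by omega
  have hcast : ((κ - 1 : ℕ) : ℝ) = κ - 1 := by rw [Nat.cast_pred hκ₁]
  have hexp : (2 : ℤ) - κ = 1 - ((κ - 1 : ℕ) : ℤ) := by omega
  have hsol : w T ^ (κ - 1) = w 0 ^ (κ - 1) + ((κ : ℝ) - 1) * (-1) * (T - 0) := by
    rw [← hcast]
    refine pow_eq_of_forall_hasDerivAt_mul_zpow (κ - 1) hT fun s hs => ?_
    obtain ⟨hpos, hderiv⟩ := hw s hs
    exact ⟨hpos.ne', by simpa [hexp] using hderiv⟩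
  have hpos : 0 < w T ^ (κ - 1) := pow_pos (hw T (Set.right_mem_Icc.2 hT)).1 _
  have hκR : (0 : ℝ) < κ - 1 := by linarith [show (2 : ℝ) ≤ κ by exact_mod_cast hκ]
  rw [lt_div_iff₀ hκR]
  linarith
end

section
/- Let Q be a polynomial with real coefficients, evaluated at complex arguments via its coefficients, let Q′ be its derivative polynomial, and let λ ∈ ℂ. Suppose x, y, z : ℝ → ℂ satisfy, for all s ∈ ℝ: x′(s) = i·Q(x(s)), y′(s) = i·(λ·z(s) − (1/2)·Q′(x(s))·y(s)), and z′(s) = i·(−λ·y(s) − (1/2)·Q′(x(s))·z(s)). Then the function s ↦ Q(x(s))·(y(s)² + z(s)²) is constant on ℝ. -/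
/-!
Along `x' = i Q(x)` the factor `Q(x)` grows at the logarithmic rate `i Q'(x)`. In the `(y, z)`
system the `λ`-terms form an infinitesimal rotation, which preserves `y² + z²`, and the scalar
terms `-(i/2) Q'(x)` make `y² + z²` change at the opposite rate `-i Q'(x)`. The two rates cancel
in the product, whose derivative therefore vanishes identically.
-/

section RateCancellation

variable {𝕜 A : Type*} [NontriviallyNormedField 𝕜] [NormedCommRing A] [NormedAlgebra 𝕜 A]
  {f g y z : 𝕜 → A} {t : 𝕜} {a c μ : A}

theorem HasDerivAt.mul_eq_zero_of_opposite_rates (hf : HasDerivAt f (c * f t) t)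
    (hg : HasDerivAt g (-c * g t) t) : HasDerivAt (fun s => f s * g s) 0 t :=
  (hf.mul hg).congr_deriv (by ring)

theorem HasDerivAt.sq_add_sq_of_rotation_sub_scalar
    (hy : HasDerivAt y (μ * z t - a * y t) t) (hz : HasDerivAt z (-(μ * y t) - a * z t) t) :
    HasDerivAt (fun s => y s ^ 2 + z s ^ 2) (-(2 * a) * (y t ^ 2 + z t ^ 2)) t :=
  ((hy.pow 2).add (hz.pow 2)).congr_deriv (by simp only [Nat.cast_ofNat]; ring)

end RateCancellation

/-- If `x, y, z : ℝ → ℂ` satisfy `x' = i Q(x)`,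
`y' = i (λ z - (1/2) Q'(x) y)` and `z' = i (-λ y - (1/2) Q'(x) z)` with `Q` a real
polynomial (evaluated on `ℂ`) and `λ ∈ ℂ`, then `s ↦ Q(x s)·(y s² + z s²)` is constant. -/
theorem zeroHopf_conservation_imag_time
    (Q : Polynomial ℝ) (lam : ℂ) (x y z : ℝ → ℂ)
    (hx : ∀ s : ℝ, HasDerivAt x (Complex.I * (Polynomial.aeval (x s)) Q) s)
    (hy : ∀ s : ℝ, HasDerivAt y
      (Complex.I * (lam * z s - (1 / 2) * (Polynomial.aeval (x s)) Q.derivative * y s)) s)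
    (hz : ∀ s : ℝ, HasDerivAt z
      (Complex.I * (-(lam * y s) - (1 / 2) * (Polynomial.aeval (x s)) Q.derivative * z s)) s) :
    ∀ s t : ℝ,
      (Polynomial.aeval (x s)) Q * (y s ^ 2 + z s ^ 2) =
        (Polynomial.aeval (x t)) Q * (y t ^ 2 + z t ^ 2) := by
  have hconst : ∀ s : ℝ, HasDerivAt
      (fun s => (Polynomial.aeval (x s)) Q * (y s ^ 2 + z s ^ 2)) 0 s := by
    intro s
    set c := Complex.I * (Polynomial.aeval (x s)) Q.derivative
    have hQx : HasDerivAt (fun s => (Polynomial.aeval (x s)) Q)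
        (c * (Polynomial.aeval (x s)) Q) s :=
      ((Q.hasDerivAt_aeval (x s)).comp s (hx s)).congr_deriv (by ring)
    have hyz : HasDerivAt (fun s => y s ^ 2 + z s ^ 2) (-c * (y s ^ 2 + z s ^ 2)) s :=
      ((hy s).congr_deriv (by ring) |>.sq_add_sq_of_rotation_sub_scalar
        (μ := Complex.I * lam) (a := c / 2) ((hz s).congr_deriv (by ring))).congr_deriv (by ring)
    exact hQx.mul_eq_zero_of_opposite_rates hyz
  exact is_const_of_deriv_eq_zero (fun s => (hconst s).differentiableAt) (fun s => (hconst s).deriv)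
end

section
/- Let Q be a polynomial with real coefficients, evaluated at complex arguments via its coefficients, let Q′ be its derivative polynomial, and let λ ∈ ℂ. Suppose x, y, z : ℝ → ℂ satisfy, for all s ∈ ℝ: x′(s) = Q(x(s)), y′(s) = λ·z(s) − (1/2)·Q′(x(s))·y(s), and z′(s) = −λ·y(s) − (1/2)·Q′(x(s))·z(s). Then the function s ↦ Q(x(s))·(y(s)² + z(s)²) is constant on ℝ. -/
open Polynomial

theorem HasDerivAt.polynomial_aeval {𝕜 𝕜' R : Type*} [NontriviallyNormedField 𝕜]
    [NontriviallyNormedField 𝕜'] [NormedAlgebra 𝕜 𝕜'] [CommSemiring R] [Algebra R 𝕜']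
    {x : 𝕜 → 𝕜'} {x' : 𝕜'} {s : 𝕜} (q : R[X]) (hx : HasDerivAt x x' s) :
    HasDerivAt (fun t => aeval (x t) q) (aeval (x s) (derivative q) * x') s :=
  (q.hasDerivAt_aeval (x s)).comp s hx

/-- The rotation `(y, z) ↦ lam • (z, -y)` preserves `y ^ 2 + z ^ 2`, while the damping `-p • (y, z)`
scales it at rate `-2p`; a weight `q` growing at rate `2p` compensates exactly. -/
theorem hasDerivAt_mul_sq_add_sq_zero {𝕜 𝔸 : Type*} [NontriviallyNormedField 𝕜]
    [NormedCommRing 𝔸] [NormedAlgebra 𝕜 𝔸] {q y z : 𝕜 → 𝔸} {p lam : 𝔸} {s : 𝕜}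
    (hq : HasDerivAt q (2 * p * q s) s) (hy : HasDerivAt y (lam * z s - p * y s) s)
    (hz : HasDerivAt z (-(lam * y s) - p * z s) s) :
    HasDerivAt (fun t => q t * (y t ^ 2 + z t ^ 2)) 0 s := by
  convert hq.fun_mul ((hy.fun_pow 2).fun_add (hz.fun_pow 2)) using 1
  ring

/-- If `x, y, z : ℝ → ℂ` satisfy `x' = Q(x)`,
`y' = λ z - (1/2) Q'(x) y` and `z' = -λ y - (1/2) Q'(x) z` with `Q` a real polynomial
(evaluated on `ℂ`) and `λ ∈ ℂ`, then `s ↦ Q(x s)·(y s² + z s²)` is constant. -/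
theorem zeroHopf_conservation_real_time
    (Q : Polynomial ℝ) (lam : ℂ) (x y z : ℝ → ℂ)
    (hx : ∀ s : ℝ, HasDerivAt x ((Polynomial.aeval (x s)) Q) s)
    (hy : ∀ s : ℝ, HasDerivAt y
      (lam * z s - (1 / 2) * (Polynomial.aeval (x s)) Q.derivative * y s) s)
    (hz : ∀ s : ℝ, HasDerivAt z
      (-(lam * y s) - (1 / 2) * (Polynomial.aeval (x s)) Q.derivative * z s) s) :
    ∀ s t : ℝ,
      (Polynomial.aeval (x s)) Q * (y s ^ 2 + z s ^ 2) =
        (Polynomial.aeval (x t)) Q * (y t ^ 2 + z t ^ 2) := by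
  have hconserved : ∀ s, HasDerivAt (fun t => aeval (x t) Q * (y t ^ 2 + z t ^ 2)) 0 s := by
    intro s
    -- `p = Q'(x s) / 2` is read off `hy`, so `Q(x)' = Q'(x) Q(x) = 2 p Q(x)`.
    have hQx := (hx s).polynomial_aeval Q
    exact hasDerivAt_mul_sq_add_sq_zero (hQx.congr_deriv (by ring)) (hy s) (hz s)
  exact is_const_of_deriv_eq_zero (fun s => (hconserved s).differentiableAt)
    (fun s => (hconserved s).deriv)
end

section
/- Let κ ∈ ℕ, κ ≥ 2, and a_0,…,a_{κ−1} ∈ ℝ, and define the planar vector field V : ℝ² → ℝ² by V(w, θ) = ( −w·(−cos((κ−1)θ) + Σ_{α=0}^{κ−1} a_α w^{κ−α} cos((α−1)θ)), −sin((κ−1)θ) + Σ_{α=0}^{κ−1} a_α w^{κ−α} sin((α−1)θ) ). Then the zeros of V on the line {w = 0} with θ ∈ [0, 2π) are exactly the 2(κ−1) points (0, θ_l) with θ_l = π(l−1)/(κ−1), l ∈ {1,…,2(κ−1)}; moreover at each such point V is differentiable and its Jacobian matrix DV(0, θ_l) is lower triangular with diagonal entries (−1)^{l−1} and (κ−1)(−1)^l.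 In particular det DV(0, θ_l) = −(κ−1) < 0, so each (0, θ_l) is a hyperbolic saddle. -/
/-!
On the line `w = 0` every term carrying a coefficient `a_α` contains a positive power of `w`,
so `V (0, θ) = (0, -sin ((κ - 1) θ))`, whose zeros in `[0, 2π)` are the `θ_l`. The same
divisibility makes the derivative of those terms at `(0, θ)` a multiple of `dw` alone, so the
Jacobian there is that of `(w cos ((κ - 1) θ), -sin ((κ - 1) θ))` up to its lower-left entry:
its diagonal is `cos ((κ - 1) θ_l) = (-1)^(l-1)` and `-(κ - 1) cos ((κ - 1) θ_l)`.
-/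

open Finset Real

theorem sin_nat_mul_eq_zero_iff_of_mem_Ico {n : ℕ} (hn : 0 < n) {θ : ℝ}
    (hθ : θ ∈ Set.Ico 0 (2 * π)) :
    sin (n * θ) = 0 ↔ ∃ k < 2 * n, θ = π * k / n := by
  have hn' : (0 : ℝ) < n := by exact_mod_cast hn
  constructor
  · intro h
    obtain ⟨m, hm⟩ := sin_eq_zero_iff.mp h
    have hm0 : 0 ≤ m := by
      have : (0 : ℝ) ≤ m := by nlinarith [hθ.1, pi_pos]
      exact_mod_cast this
    lift m to ℕ using hm0
    push_cast at hm
    refine ⟨m, ?_, by field_simp; linarith⟩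
    have : (m : ℝ) < 2 * n := by nlinarith [hθ.2, pi_pos]
    exact_mod_cast this
  · rintro ⟨k, -, rfl⟩
    rw [mul_div_cancel₀ _ hn'.ne', mul_comm, sin_nat_mul_pi]

lemma ContinuousLinearMap.eq_smul_fst_of_apply_zero_one (L : ℝ × ℝ →L[ℝ] ℝ) (h : L (0, 1) = 0) :
    L = L (1, 0) • ContinuousLinearMap.fst ℝ ℝ ℝ := by
  ext <;> simp [h]

theorem DifferentiableAt.hasFDerivAt_smul_fst_of_vanishing_on_axis {F : ℝ × ℝ → ℝ} {y : ℝ}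
    (hF : DifferentiableAt ℝ F (0, y)) (h0 : ∀ t, F (0, t) = 0) :
    HasFDerivAt F (fderiv ℝ F (0, y) (1, 0) • ContinuousLinearMap.fst ℝ ℝ ℝ) (0, y) := by
  have hline : HasDerivAt (fun t : ℝ => ((0 : ℝ), t)) (0, 1) y :=
    (hasDerivAt_const y 0).prodMk (hasDerivAt_id y)
  have hzero : fderiv ℝ F (0, y) (0, 1) = 0 :=
    (hF.hasFDerivAt.comp_hasDerivAt y hline).unique
      (by simpa [Function.comp_def, h0] using hasDerivAt_const y (0 : ℝ))
  rw [← (fderiv ℝ F (0, y)).eq_smul_fst_of_apply_zero_one hzero]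
  exact hF.hasFDerivAt

theorem hasFDerivAt_neg_fst_mul {G : ℝ × ℝ → ℝ} {y : ℝ} (hG : DifferentiableAt ℝ G (0, y)) :
    HasFDerivAt (fun p : ℝ × ℝ => -p.1 * G p)
      (-G (0, y) • ContinuousLinearMap.fst ℝ ℝ ℝ) (0, y) := by
  refine ((hasFDerivAt_fst (p := ((0 : ℝ), y))).neg.fun_mul hG.hasFDerivAt).congr_fderiv ?_
  simp only [neg_zero, zero_smul, zero_add, smul_neg]
  module

section

variable (κ : ℕ) (a : ℕ → ℝ)

noncomputable def lowerOrderTerms (f : ℝ → ℝ) (p : ℝ × ℝ) : ℝ :=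
  ∑ α ∈ range κ, a α * p.1 ^ (κ - α) * f (((α : ℝ) - 1) * p.2)

theorem lowerOrderTerms_zero_fst (f : ℝ → ℝ) (y : ℝ) :
    lowerOrderTerms κ a f (0, y) = 0 :=
  sum_eq_zero fun α hα => by
    rw [zero_pow (Nat.sub_ne_zero_of_lt (mem_range.mp hα)), mul_zero, zero_mul]

theorem differentiable_lowerOrderTerms {f : ℝ → ℝ} (hf : Differentiable ℝ f) :
    Differentiable ℝ (lowerOrderTerms κ a f) := by
  unfold lowerOrderTerms
  fun_prop

/-- The paper's `V` in the chart `x = w⁻¹ e^{iθ}`; the coefficients `a_α` of `Q` enter only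
through `lowerOrderTerms`. -/
noncomputable def poincareField (p : ℝ × ℝ) : ℝ × ℝ :=
  (-p.1 * (-cos (((κ : ℝ) - 1) * p.2) + lowerOrderTerms κ a cos p),
    -sin (((κ : ℝ) - 1) * p.2) + lowerOrderTerms κ a sin p)

theorem poincareField_zero_fst_eq_zero_iff (y : ℝ) :
    poincareField κ a (0, y) = 0 ↔ sin (((κ : ℝ) - 1) * y) = 0 := by
  simp [poincareField, lowerOrderTerms_zero_fst]

theorem hasFDerivAt_poincareField_zero_fst (y : ℝ) :
    ∃ c : ℝ, HasFDerivAt (poincareField κ a)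
      ((cos (((κ : ℝ) - 1) * y) • ContinuousLinearMap.fst ℝ ℝ ℝ).prod
        (c • ContinuousLinearMap.fst ℝ ℝ ℝ +
          (-(((κ : ℝ) - 1) * cos (((κ : ℝ) - 1) * y))) • ContinuousLinearMap.snd ℝ ℝ ℝ))
      (0, y) := by
  have hfirst := hasFDerivAt_neg_fst_mul
    (G := fun p => -cos (((κ : ℝ) - 1) * p.2) + lowerOrderTerms κ a cos p) (y := y)
    (by have := differentiable_lowerOrderTerms κ a differentiable_cos; fun_prop)
  have hsin : HasFDerivAt (fun p : ℝ × ℝ => sin (((κ : ℝ) - 1) * p.2))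
      (cos (((κ : ℝ) - 1) * y) • ((κ : ℝ) - 1) • ContinuousLinearMap.snd ℝ ℝ ℝ) (0, y) :=
    (hasDerivAt_sin _).comp_hasFDerivAt ((0 : ℝ), y)
      ((hasFDerivAt_snd (p := ((0 : ℝ), y))).const_mul ((κ : ℝ) - 1))
  have hterms := DifferentiableAt.hasFDerivAt_smul_fst_of_vanishing_on_axis
    (differentiable_lowerOrderTerms κ a differentiable_sin (0, y)) (lowerOrderTerms_zero_fst κ a sin)
  refine ⟨fderiv ℝ (lowerOrderTerms κ a sin) (0, y) (1, 0),
    (hfirst.prodMk (hsin.neg.add hterms)).congr_fderiv ?_⟩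
  rw [lowerOrderTerms_zero_fst, add_zero, neg_neg]
  congr 1
  module

end

/-- The desingularized Poincaré compactification at infinity of `x' = Q(x)`.
With `V(w,θ) = (-w(-cos((κ-1)θ) + Σ_α a_α w^{κ-α} cos((α-1)θ)),
-sin((κ-1)θ) + Σ_α a_α w^{κ-α} sin((α-1)θ))`, the zeros of `V` on `{w = 0}` with
`θ ∈ [0, 2π)` are exactly the points `(0, θ_l)`, `θ_l = π(l-1)/(κ-1)`,
`l ∈ {1,…,2(κ-1)}`; at each such point `V` is differentiable with lower-triangular
Jacobian of diagonal entries `(-1)^{l-1}` and `(κ-1)(-1)^l` (a hyperbolic saddle). -/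
theorem zeroHopf_saddles_at_infinity_real_time
    (κ : ℕ) (hκ : 2 ≤ κ) (a : ℕ → ℝ)
    (V : ℝ × ℝ → ℝ × ℝ)
    (hV : V = fun p : ℝ × ℝ =>
      (-(p.1) * (-Real.cos (((κ : ℝ) - 1) * p.2) +
          ∑ α ∈ Finset.range κ, a α * p.1 ^ (κ - α) * Real.cos (((α : ℝ) - 1) * p.2)),
        -Real.sin (((κ : ℝ) - 1) * p.2) +
          ∑ α ∈ Finset.range κ, a α * p.1 ^ (κ - α) * Real.sin (((α : ℝ) - 1) * p.2))) :
    (∀ θ ∈ Set.Ico (0 : ℝ) (2 * Real.pi),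
      (V (0, θ) = 0 ↔ ∃ l : ℕ, 1 ≤ l ∧ l ≤ 2 * (κ - 1) ∧
        θ = Real.pi * ((l : ℝ) - 1) / ((κ : ℝ) - 1))) ∧
    (∀ l : ℕ, 1 ≤ l → l ≤ 2 * (κ - 1) → ∃ c : ℝ,
      HasFDerivAt V
        ((((-1 : ℝ) ^ (l - 1)) • (ContinuousLinearMap.fst ℝ ℝ ℝ)).prod
          (c • ContinuousLinearMap.fst ℝ ℝ ℝ +
            ((((κ : ℝ) - 1) * (-1 : ℝ) ^ l) • ContinuousLinearMap.snd ℝ ℝ ℝ)))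
        (0, Real.pi * ((l : ℝ) - 1) / ((κ : ℝ) - 1))) := by
  obtain rfl : V = poincareField κ a := hV
  have hK : (κ : ℝ) - 1 = ((κ - 1 : ℕ) : ℝ) := by rw [Nat.cast_sub (by omega)]; simp
  refine ⟨fun θ hθ => ?_, fun l hl hl' => ?_⟩
  · rw [poincareField_zero_fst_eq_zero_iff, hK, sin_nat_mul_eq_zero_iff_of_mem_Ico (by omega) hθ]
    constructor
    · rintro ⟨k, hk, rfl⟩
      exact ⟨k + 1, by omega, by omega, by push_cast; ring⟩
    · rintro ⟨l, hl, hl', rfl⟩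
      exact ⟨l - 1, by omega, by rw [Nat.cast_sub hl]; simp⟩
  · obtain ⟨c, hc⟩ := hasFDerivAt_poincareField_zero_fst κ a (π * ((l : ℝ) - 1) / ((κ : ℝ) - 1))
    have hcos : cos (((κ : ℝ) - 1) * (π * ((l : ℝ) - 1) / ((κ : ℝ) - 1))) = (-1) ^ (l - 1) := by
      rw [mul_div_cancel₀ _ (by rw [hK]; norm_cast; omega), ← cos_nat_mul_pi, Nat.cast_sub hl]
      push_cast; ring_nf
    obtain ⟨m, rfl⟩ : ∃ m, l = m + 1 := ⟨l - 1, by omega⟩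
    refine ⟨c, hc.congr_fderiv ?_⟩
    rw [hcos, pow_succ]
    simp
end

section
/- Let κ ∈ ℕ, κ ≥ 2, and a_0,…,a_{κ−1} ∈ ℝ, and define the planar vector field V : ℝ² → ℝ² by V(w, θ) = ( w·(−sin((κ−1)θ) + Σ_{α=0}^{κ−1} a_α w^{κ−α} sin((α−1)θ)), −cos((κ−1)θ) + Σ_{α=0}^{κ−1} a_α w^{κ−α} cos((α−1)θ) ). Then the zeros of V on the line {w = 0} with θ ∈ [0, 2π) are exactly the 2(κ−1) points (0, θ_l) with θ_l = π(l−1)/(κ−1) + π/(2(κ−1)), l ∈ {1,…,2(κ−1)}; moreover at each such point V is differentiable and its Jacobian matrix DV(0, θ_l) is lower triangular with diagonal entries (−1)^l and (κ−1)(−1)^{l−1}. In particular det DV(0, θ_l) = −(κ−1) < 0, so each (0, θ_l) is a hyperbolic saddle. -/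
open Finset Real

/-! On `w = 0` every perturbation term carries a factor `w ^ (κ - α)` with `κ - α ≥ 1`, so
`V (0, θ) = (0, -cos ((κ - 1) θ))` and the zeros are those of the cosine. Pulling that factor
`w` out of the sums, `V = (w * g, -cos ((κ - 1) θ) + w * h)`; at a point with `w = 0` the
derivative of `w * g` is `g (0, θ) dw`, so the Jacobian is lower triangular with diagonal
`-sin ((κ - 1) θ_l)` and `(κ - 1) sin ((κ - 1) θ_l)`, and `sin ((κ - 1) θ_l) = (-1) ^ (l - 1)`. -/

noncomputable def saddleAngle (m l : ℕ) : ℝ := π * ((l : ℝ) - 1) / m + π / (2 * m)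

lemma mul_saddleAngle {m l : ℕ} (hm : m ≠ 0) (hl : 1 ≤ l) :
    (m : ℝ) * saddleAngle m l = ((l - 1 : ℕ) : ℝ) * π + π / 2 := by
  rw [saddleAngle, Nat.cast_sub hl]
  field_simp
  ring

lemma cos_mul_saddleAngle {m l : ℕ} (hm : m ≠ 0) (hl : 1 ≤ l) :
    cos ((m : ℝ) * saddleAngle m l) = 0 := by
  rw [mul_saddleAngle hm hl, cos_add_pi_div_two, sin_nat_mul_pi, neg_zero]

lemma sin_mul_saddleAngle {m l : ℕ} (hm : m ≠ 0) (hl : 1 ≤ l) :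
    sin ((m : ℝ) * saddleAngle m l) = (-1) ^ (l - 1) := by
  rw [mul_saddleAngle hm hl, sin_add_pi_div_two, cos_nat_mul_pi]

lemma cos_mul_eq_zero_iff_eq_saddleAngle {m : ℕ} (hm : 0 < m) {θ : ℝ}
    (hθ : θ ∈ Set.Ico 0 (2 * π)) :
    cos ((m : ℝ) * θ) = 0 ↔ ∃ l : ℕ, 1 ≤ l ∧ l ≤ 2 * m ∧ θ = saddleAngle m l := by
  constructor
  · intro hcos
    obtain ⟨n, hn⟩ := cos_eq_zero_iff.mp hcos
    have hθn : θ = (2 * n + 1) * π / (2 * m) := by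
      field_simp
      linarith
    have hθ' : 0 ≤ (2 * n + 1) * π ∧ (2 * n + 1) * π < 2 * π * (2 * m) := by
      rw [hθn] at hθ
      obtain ⟨h0, h2π⟩ := hθ
      constructor
      · rwa [le_div_iff₀ (by positivity), zero_mul] at h0
      · rwa [div_lt_iff₀ (by positivity)] at h2π
    have hn0 : (0 : ℝ) ≤ 2 * n + 1 := nonneg_of_mul_nonneg_left hθ'.1 pi_pos
    have hn2m : (2 * n + 1 : ℝ) < 2 * (2 * m) := by nlinarith [pi_pos]
    have hn0' : 0 ≤ n := by
      have : (-1 : ℤ) < n := by exact_mod_cast (by linarith : (-1 : ℝ) < n)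
      omega
    lift n to ℕ using hn0'
    push_cast at hn2m
    have hn2m' : n < 2 * m := by exact_mod_cast (by linarith : (n : ℝ) < 2 * m)
    refine ⟨n + 1, by omega, by omega, ?_⟩
    rw [hθn, saddleAngle]
    push_cast
    field_simp
    ring
  · rintro ⟨l, hl, -, rfl⟩
    exact cos_mul_saddleAngle hm.ne' hl

lemma sum_mul_pow_sub_eq_mul_sum {R : Type*} [CommSemiring R] (κ : ℕ) (a b : ℕ → R) (w : R) :
    ∑ α ∈ range κ, a α * w ^ (κ - α) * b α = w * ∑ α ∈ range κ, a α * w ^ (κ - α - 1) * b α := by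
  rw [mul_sum]
  refine sum_congr rfl fun α hα => ?_
  have hpow : w ^ (κ - α) = w * w ^ (κ - α - 1) := by
    rw [← pow_succ']
    congr 1
    have := mem_range.mp hα
    omega
  rw [hpow]
  ring

lemma hasFDerivAt_fst_mul_of_fst_eq_zero {𝕜 F : Type*} [NontriviallyNormedField 𝕜]
    [NormedAddCommGroup F] [NormedSpace 𝕜 F] {k : 𝕜 × F → 𝕜} {p : 𝕜 × F}
    (hk : DifferentiableAt 𝕜 k p) (hp : p.1 = 0) :
    HasFDerivAt (fun q => q.1 * k q) (k p • ContinuousLinearMap.fst 𝕜 𝕜 F) p := by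
  refine (hasFDerivAt_fst.fun_mul hk.hasFDerivAt).congr_fderiv ?_
  exact ContinuousLinearMap.ext fun v => by simp [hp]

lemma hasFDerivAt_neg_cos_mul_snd (c : ℝ) (p : ℝ × ℝ) :
    HasFDerivAt (fun q : ℝ × ℝ => -cos (c * q.2))
      ((c * sin (c * p.2)) • ContinuousLinearMap.snd ℝ ℝ ℝ) p := by
  refine ((hasDerivAt_cos (c * p.2)).comp_hasFDerivAt p
    ((hasFDerivAt_snd (𝕜 := ℝ) (p := p)).const_mul c)).fun_neg.congr_fderiv ?_
  rw [smul_smul, ← neg_smul, neg_mul, neg_neg, mul_comm]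

/-- The desingularized Poincaré compactification at infinity of `x' = iQ(x)`.
With `V(w,θ) = (w(-sin((κ-1)θ) + Σ_α a_α w^{κ-α} sin((α-1)θ)),
-cos((κ-1)θ) + Σ_α a_α w^{κ-α} cos((α-1)θ))`, the zeros of `V` on `{w = 0}` with
`θ ∈ [0, 2π)` are exactly the points `(0, θ_l)`, `θ_l = π(l-1)/(κ-1) + π/(2(κ-1))`,
`l ∈ {1,…,2(κ-1)}`; at each such point `V` is differentiable with lower-triangular
Jacobian of diagonal entries `(-1)^l` and `(κ-1)(-1)^{l-1}` (a hyperbolic saddle). -/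
theorem zeroHopf_saddles_at_infinity_imag_time
    (κ : ℕ) (hκ : 2 ≤ κ) (a : ℕ → ℝ)
    (V : ℝ × ℝ → ℝ × ℝ)
    (hV : V = fun p : ℝ × ℝ =>
      (p.1 * (-Real.sin (((κ : ℝ) - 1) * p.2) +
          ∑ α ∈ Finset.range κ, a α * p.1 ^ (κ - α) * Real.sin (((α : ℝ) - 1) * p.2)),
        -Real.cos (((κ : ℝ) - 1) * p.2) +
          ∑ α ∈ Finset.range κ, a α * p.1 ^ (κ - α) * Real.cos (((α : ℝ) - 1) * p.2))) :
    (∀ θ ∈ Set.Ico (0 : ℝ) (2 * Real.pi),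
      (V (0, θ) = 0 ↔ ∃ l : ℕ, 1 ≤ l ∧ l ≤ 2 * (κ - 1) ∧
        θ = Real.pi * ((l : ℝ) - 1) / ((κ : ℝ) - 1) + Real.pi / (2 * ((κ : ℝ) - 1)))) ∧
    (∀ l : ℕ, 1 ≤ l → l ≤ 2 * (κ - 1) → ∃ c : ℝ,
      HasFDerivAt V
        ((((-1 : ℝ) ^ l) • (ContinuousLinearMap.fst ℝ ℝ ℝ)).prod
          (c • ContinuousLinearMap.fst ℝ ℝ ℝ +
            ((((κ : ℝ) - 1) * (-1 : ℝ) ^ (l - 1)) • ContinuousLinearMap.snd ℝ ℝ ℝ)))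
        (0, Real.pi * ((l : ℝ) - 1) / ((κ : ℝ) - 1) + Real.pi / (2 * ((κ : ℝ) - 1)))) := by
  obtain ⟨m, rfl⟩ : ∃ m, κ = m + 1 := ⟨κ - 1, by omega⟩
  have hm : 0 < m := by omega
  have hcast : ((m + 1 : ℕ) : ℝ) - 1 = m := by push_cast; ring
  simp only [hcast, Nat.add_sub_cancel, sum_mul_pow_sub_eq_mul_sum] at hV ⊢
  subst hV
  refine ⟨fun θ hθ => ?_, fun l hl1 _ => ?_⟩
  · simp only [zero_mul, add_zero, Prod.mk_eq_zero, true_and, neg_eq_zero]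
    exact cos_mul_eq_zero_iff_eq_saddleAngle hm hθ
  · change ∃ c, HasFDerivAt _ _ (0, saddleAngle m l)
    have hsin := sin_mul_saddleAngle hm.ne' hl1
    have hsign : (-1 : ℝ) ^ l = -(-1) ^ (l - 1) := by
      conv_lhs => rw [← Nat.sub_add_cancel hl1, pow_succ, mul_neg_one]
    refine ⟨∑ α ∈ range (m + 1), a α * 0 ^ (m + 1 - α - 1) * cos ((α - 1) * saddleAngle m l),
      HasFDerivAt.prodMk ?_ ?_⟩
    · refine (hasFDerivAt_fst_mul_of_fst_eq_zero (by fun_prop) rfl).congr_fderiv ?_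
      simp only [zero_mul, add_zero, hsin, hsign]
    · refine ((hasFDerivAt_neg_cos_mul_snd m _).fun_add
        (hasFDerivAt_fst_mul_of_fst_eq_zero (by fun_prop) rfl)).congr_fderiv ?_
      rw [hsin, add_comm]
end
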